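/- Let A be an abelian group and θ: A → A an endomorphism. Suppose (a) the induced endomorphism θ[1/ℓ] of the localization A[1/ℓ] is an automorphism, (b) for each a ∈ A there exists i ∈ ℕ with θ^i(a) ∈ ℓA, and (c) whenever ℓa = 0 for some a ∈ A, there exists i ∈ ℕ with θ^i(a) = 0. Then the colimit of the diagram A →θ A →θ A → ⋯ is isomorphic, compatibly with the maps from A, to the localization A[1/ℓ] ≅ ℤ[1/ℓ] ⊗ A. -/

import Mathlib

open TensorProduct

noncomputable section

/-- `ℤ[1/ℓ]`. -/
abbrev Zloc (ℓ : ℤ) : Type := Localization.Away ℓ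

/-- `A[1/ℓ] = ℤ[1/ℓ] ⊗_ℤ A`. -/
abbrev loc (ℓ : ℤ) (A : Type) [AddCommGroup A] : Type := Zloc ℓ ⊗[ℤ] A

/-- The map `A → A[1/ℓ]`, `a ↦ 1 ⊗ a`. -/
def toLoc (ℓ : ℤ) (A : Type) [AddCommGroup A] : A →+ loc ℓ A :=
  ((TensorProduct.mk ℤ (Zloc ℓ) A) 1).toAddMonoidHom

/-- The induced endomorphism `θ[1/ℓ]` of `A[1/ℓ]`. -/
def locMap (ℓ : ℤ) {A : Type} [AddCommGroup A] (θ : A →+ A) : loc ℓ A →+ loc ℓ A :=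
  (LinearMap.lTensor (Zloc ℓ) θ.toIntLinearMap).toAddMonoidHom

/-- The sequential colimit of `A → A → A → ⋯` along `θ`. -/
abbrev seqColim {A : Type} [AddCommGroup A] (θ : A →+ A) : Type :=
  AddCommGroup.DirectLimit (fun _ : ℕ => A)
    (fun i j _ => show A →+ A from (show AddMonoid.End A from θ) ^ (j - i))

/-- The canonical map `A → colim_θ A` (at stage 0). -/
def seqColimOf {A : Type} [AddCommGroup A] (θ : A →+ A) : A →+ seqColim θ :=
  AddCommGroup.DirectLimit.of (fun _ : ℕ => A)
    (fun i j _ => show A →+ A from (show AddMonoid.End A from θ) ^ (j - i)) 0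

/-! With `ψ = θ[1/ℓ]`, the maps `ψ⁻ⁿ ∘ (1 ⊗ -) : A → A[1/ℓ]` form a cocone on `A →θ A →θ ⋯`.
The induced map out of the colimit is injective since `1 ⊗ a = 0` forces `ℓᵏ a = 0`, and then
some `θⁱ a = 0` by (c). It is surjective since every `x` has `ℓᵏ x = 1 ⊗ a`, by (b) some
`θⁱ a = ℓᵏ b`, and then `ψⁱ x = 1 ⊗ b` because multiplication by `ℓᵏ` is injective on `A[1/ℓ]`. -/

section Iterates

variable {A : Type*} [AddCommGroup A] {θ : A →+ A} {n : ℤ}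

theorem exists_iterate_eq_pow_smul (hb : ∀ a : A, ∃ i : ℕ, ∃ b : A, θ^[i] a = n • b) (k : ℕ)
    (a : A) : ∃ i : ℕ, ∃ b : A, θ^[i] a = n ^ k • b := by
  induction k generalizing a with
  | zero => exact ⟨0, a, by simp⟩
  | succ k ih =>
    obtain ⟨i, b, hi⟩ := ih a
    obtain ⟨j, c, hj⟩ := hb b
    refine ⟨j + i, c, ?_⟩
    rw [Function.iterate_add_apply, hi, iterate_map_zsmul, hj, pow_succ, mul_smul]

theorem exists_iterate_eq_zero_of_pow_smul_eq_zero
    (hc : ∀ a : A, n • a = 0 → ∃ i : ℕ, θ^[i] a = 0) (k : ℕ) {a : A} (ha : n ^ k • a = 0) :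
    ∃ i : ℕ, θ^[i] a = 0 := by
  induction k generalizing a with
  | zero => exact ⟨0, by simpa using ha⟩
  | succ k ih =>
    obtain ⟨i, hi⟩ := ih (a := n • a) (by rwa [← mul_smul, ← pow_succ])
    obtain ⟨j, hj⟩ := hc (θ^[i] a) (by rwa [← iterate_map_zsmul])
    exact ⟨j + i, by rw [Function.iterate_add_apply, hj]⟩

end Iterates

section SeqColimLift

variable {A : Type} {B : Type*} [AddCommGroup A] [AddCommGroup B] {θ : A →+ A} {ψ : B ≃+ B}
  {φ : A →+ B}

def seqColimLift (hφ : Function.Semiconj φ θ ψ) : seqColim θ →+ B :=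
  AddCommGroup.DirectLimit.lift _ _ B
    (fun n => ((show AddMonoid.End B from ψ.symm.toAddMonoidHom) ^ n).comp φ)
    fun i j hij a => by
      obtain ⟨m, rfl⟩ := Nat.exists_eq_add_of_le hij
      simp only [Nat.add_sub_cancel_left]
      show ψ.symm^[i + m] (φ (θ^[m] a)) = ψ.symm^[i] (φ a)
      rw [hφ.iterate_right, Function.iterate_add_apply,
        (Function.LeftInverse.iterate (f := ψ) ψ.symm_apply_apply m).eq]

theorem seqColimLift_of (hφ : Function.Semiconj φ θ ψ) (n : ℕ) (a : A) :
    seqColimLift hφ (AddCommGroup.DirectLimit.of _ _ n a) = ψ.symm^[n] (φ a) :=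
  AddCommGroup.DirectLimit.lift_of _ _ _ _ _

theorem seqColimLift_injective (hφ : Function.Semiconj φ θ ψ)
    (hker : ∀ a : A, φ a = 0 → ∃ i : ℕ, θ^[i] a = 0) : Function.Injective (seqColimLift hφ) := by
  rw [injective_iff_map_eq_zero]
  intro z
  induction z using AddCommGroup.DirectLimit.induction_on with
  | ih n a =>
    intro hz
    rw [seqColimLift_of] at hz
    obtain ⟨m, hm⟩ := hker a <|
      ψ.symm.injective.iterate n (hz.trans (Function.iterate_fixed (map_zero ψ.symm) n).symm)
    rw [← AddCommGroup.DirectLimit.of_f (hij := Nat.le_add_right n m),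
      ← map_zero (AddCommGroup.DirectLimit.of _ _ (n + m))]
    congr 1
    rw [Nat.add_sub_cancel_left]
    exact hm

theorem seqColimLift_surjective (hφ : Function.Semiconj φ θ ψ)
    (hsurj : ∀ b : B, ∃ i : ℕ, ∃ a : A, ψ^[i] b = φ a) : Function.Surjective (seqColimLift hφ) := by
  intro b
  obtain ⟨i, a, hb⟩ := hsurj b
  refine ⟨AddCommGroup.DirectLimit.of _ _ i a, ?_⟩
  rw [seqColimLift_of, ← hb, (Function.LeftInverse.iterate (f := ψ) ψ.symm_apply_apply i).eq]

end SeqColimLift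

section Localization

variable {ℓ : ℤ} {A : Type} [AddCommGroup A]

/- `loc ℓ A` is built from the canonical `ℤ`-module structure of `ℤ[1/ℓ]`, which is not
definitionally the one of the algebra `ℤ → ℤ[1/ℓ]`; quantifying over the instance lets us
identify the two. -/
variable (ℓ A) in
theorem isLocalizedModule_mk_one [inst : Module ℤ (Zloc ℓ)] :
    IsLocalizedModule (Submonoid.powers ℓ) (TensorProduct.mk ℤ (Zloc ℓ) A 1) := by
  obtain rfl := Subsingleton.elim inst Algebra.toModule
  exact (isLocalizedModule_iff_isBaseChange (Submonoid.powers ℓ) (Zloc ℓ) _).mpr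
    (TensorProduct.isBaseChange ℤ A (Zloc ℓ))

theorem exists_pow_smul_eq_zero_of_toLoc_eq_zero {a : A} (h : toLoc ℓ A a = 0) :
    ∃ k : ℕ, ℓ ^ k • a = 0 := by
  obtain ⟨⟨_, k, rfl⟩, hk⟩ :=
    ((isLocalizedModule_mk_one ℓ A).eq_zero_iff (Submonoid.powers ℓ)).mp h
  exact ⟨k, hk⟩

theorem exists_pow_smul_eq_toLoc (x : loc ℓ A) : ∃ (k : ℕ) (a : A), ℓ ^ k • x = toLoc ℓ A a := by
  obtain ⟨⟨a, _, k, rfl⟩, hx⟩ := (isLocalizedModule_mk_one ℓ A).surj x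
  exact ⟨k, a, (int_smul_eq_zsmul _ _ _).symm.trans hx⟩

theorem loc_pow_smul_injective (k : ℕ) : Function.Injective fun x : loc ℓ A => ℓ ^ k • x := by
  intro x y h
  refine (Module.End.isUnit_iff _).mp ((isLocalizedModule_mk_one ℓ A).map_units
    ⟨ℓ ^ k, pow_mem (Submonoid.mem_powers ℓ) k⟩) |>.1 ?_
  rw [Module.algebraMap_end_apply, Module.algebraMap_end_apply]
  exact (int_smul_eq_zsmul _ _ _).trans (h.trans (int_smul_eq_zsmul _ _ _).symm)

theorem toLoc_semiconj_locMap (θ : A →+ A) : Function.Semiconj (toLoc ℓ A) θ (locMap ℓ θ) :=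
  fun _ => rfl

theorem exists_iterate_eq_zero_of_toLoc_eq_zero {θ : A →+ A}
    (hc : ∀ a : A, ℓ • a = 0 → ∃ i : ℕ, θ^[i] a = 0) {a : A} (h : toLoc ℓ A a = 0) :
    ∃ i : ℕ, θ^[i] a = 0 :=
  let ⟨k, hk⟩ := exists_pow_smul_eq_zero_of_toLoc_eq_zero h
  exists_iterate_eq_zero_of_pow_smul_eq_zero hc k hk

theorem exists_iterate_locMap_eq_toLoc {θ : A →+ A}
    (hb : ∀ a : A, ∃ i : ℕ, ∃ b : A, θ^[i] a = ℓ • b) (x : loc ℓ A) :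
    ∃ i : ℕ, ∃ b : A, (locMap ℓ θ)^[i] x = toLoc ℓ A b := by
  obtain ⟨k, a, hx⟩ := exists_pow_smul_eq_toLoc x
  obtain ⟨i, b, hab⟩ := exists_iterate_eq_pow_smul hb k a
  refine ⟨i, b, loc_pow_smul_injective k ?_⟩
  calc ℓ ^ k • (locMap ℓ θ)^[i] x = (locMap ℓ θ)^[i] (ℓ ^ k • x) :=
        (iterate_map_zsmul _ _ _ _).symm
    _ = toLoc ℓ A (θ^[i] a) := by rw [hx, (toLoc_semiconj_locMap θ).iterate_right]
    _ = ℓ ^ k • toLoc ℓ A b := by rw [hab, map_zsmul]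

end Localization

theorem lemma_localisation_general {A : Type} [AddCommGroup A] (ℓ : ℤ) (θ : A →+ A)
    (ha : Function.Bijective (locMap ℓ θ))
    (hb : ∀ a : A, ∃ i : ℕ, ∃ b : A, (⇑θ)^[i] a = ℓ • b)
    (hc : ∀ a : A, ℓ • a = 0 → ∃ i : ℕ, (⇑θ)^[i] a = 0) :
    ∃ e : seqColim θ ≃+ loc ℓ A, ∀ a : A, e (seqColimOf θ a) = toLoc ℓ A a := by
  let ψ : loc ℓ A ≃+ loc ℓ A := .ofBijective (locMap ℓ θ) ha
  have hφ : Function.Semiconj (toLoc ℓ A) θ ψ := toLoc_semiconj_locMap θ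
  have hΦ : Function.Bijective (seqColimLift hφ) :=
    ⟨seqColimLift_injective hφ fun _ => exists_iterate_eq_zero_of_toLoc_eq_zero hc,
      seqColimLift_surjective hφ (exists_iterate_locMap_eq_toLoc hb)⟩
  exact ⟨.ofBijective _ hΦ, seqColimLift_of hφ 0⟩

/-- Lemma 2.2 (1)⇒(2): conditions (a),(b),(c) imply that the colimit of
`A →θ A →θ ⋯` is isomorphic to `A[1/ℓ]`, compatibly with the maps from `A`. -/
theorem lemma_localisation {A : Type} [AddCommGroup A] (ℓ : ℤ) (hℓ : 0 < ℓ) (θ : A →+ A)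
    (ha : Function.Bijective (locMap ℓ θ))
    (hb : ∀ a : A, ∃ i : ℕ, ∃ b : A, (⇑θ)^[i] a = ℓ • b)
    (hc : ∀ a : A, ℓ • a = 0 → ∃ i : ℕ, (⇑θ)^[i] a = 0) :
    ∃ e : seqColim θ ≃+ loc ℓ A, ∀ a : A, e (seqColimOf θ a) = toLoc ℓ A a :=
  lemma_localisation_general ℓ θ ha hb hc
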